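/- Let n, q be positive integers, let W ∈ ℝ^{n×n} be symmetric positive definite, let S ∈ ℝ^{n×q} have linearly independent columns, and let R ∈ ℝ^{n×n} be symmetric. Define P := S(SᵀWS)⁻¹Sᵀ and E := W·P·R·(I − P·W) + R·P·W. Then E is the unique minimizer of the weighted Frobenius norm objective E' ↦ Tr(W⁻¹E'W⁻¹(E')ᵀ) over all symmetric matrices E' ∈ ℝ^{n×n} satisfying E'·S = R·S; i.e., for every symmetric E' with E'·S = R·S one has Tr(W⁻¹EW⁻¹Eᵀ) ≤ Tr(W⁻¹E'W⁻¹(E')ᵀ), with equality only if E' = E. -/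

import Mathlib

/-!
Every admissible `E'` is `E + D` with `D` symmetric and `D S = 0`, hence `D P = P D = 0` for
`P = P(S,W)`. Since `W⁻¹ E W⁻¹ = P R (1 - P W) W⁻¹ + W⁻¹ R P`, the matrix `E` is orthogonal to
every such `D` for the inner product `⟪X, Y⟫ = Tr(W⁻¹ X W⁻¹ Yᵀ)`, so the objective splits as
`‖E‖² + ‖D‖²`, and `‖D‖² = ‖W^{-1/2} D W^{-1/2}‖_F²` vanishes only for `D = 0`.
-/

open Matrix

/-- The projection-type matrix `P(S,W) := S (Sᵀ W S)⁻¹ Sᵀ`. -/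
noncomputable def projMat {n q : ℕ} (S : Matrix (Fin n) (Fin q) ℝ)
    (W : Matrix (Fin n) (Fin n) ℝ) : Matrix (Fin n) (Fin n) ℝ :=
  S * (Sᵀ * W * S)⁻¹ * Sᵀ

section WeightedTrace

variable {n : Type*} [Fintype n]

lemma trace_mul_mul_mul_transpose_of_eq_transpose_mul_self {V B : Matrix n n ℝ}
    (hV : V = Bᵀ * B) (D : Matrix n n ℝ) :
    trace (V * D * V * Dᵀ) = trace (B * D * Bᵀ * (B * D * Bᵀ)ᵀ) := by
  rw [hV, show Bᵀ * B * D * (Bᵀ * B) * Dᵀ = Bᵀ * (B * D * Bᵀ * B * Dᵀ) by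
    simp only [Matrix.mul_assoc], trace_mul_comm]
  simp only [transpose_mul, transpose_transpose, Matrix.mul_assoc]

open scoped MatrixOrder in
lemma Matrix.PosSemidef.exists_eq_transpose_mul_self [DecidableEq n] {V : Matrix n n ℝ}
    (hV : V.PosSemidef) : ∃ B : Matrix n n ℝ, V = Bᵀ * B := by
  obtain ⟨B, rfl⟩ := CStarAlgebra.nonneg_iff_eq_star_mul_self.mp hV.nonneg
  exact ⟨B, by rw [star_eq_conjTranspose, conjTranspose_eq_transpose_of_trivial]⟩

lemma Matrix.PosSemidef.trace_mul_mul_mul_transpose_nonneg {V : Matrix n n ℝ}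
    (hV : V.PosSemidef) (D : Matrix n n ℝ) : 0 ≤ trace (V * D * V * Dᵀ) := by
  classical
  obtain ⟨B, hB⟩ := hV.exists_eq_transpose_mul_self
  rw [trace_mul_mul_mul_transpose_of_eq_transpose_mul_self hB,
    ← conjTranspose_eq_transpose_of_trivial (B * D * Bᵀ)]
  exact (posSemidef_self_mul_conjTranspose _).trace_nonneg

lemma Matrix.PosDef.trace_mul_mul_mul_transpose_eq_zero_iff [DecidableEq n] {V : Matrix n n ℝ}
    (hV : V.PosDef) {D : Matrix n n ℝ} : trace (V * D * V * Dᵀ) = 0 ↔ D = 0 := by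
  obtain ⟨B, hB⟩ := hV.posSemidef.exists_eq_transpose_mul_self
  have hBdet : IsUnit B.det := by
    have hVdet := hV.det_pos.ne'
    rw [hB, det_mul, det_transpose] at hVdet
    exact (right_ne_zero_of_mul hVdet).isUnit
  rw [trace_mul_mul_mul_transpose_of_eq_transpose_mul_self hB,
    ← conjTranspose_eq_transpose_of_trivial (B * D * Bᵀ), trace_mul_conjTranspose_self_eq_zero_iff]
  constructor
  · intro h
    have hBTdet : IsUnit Bᵀ.det := by rwa [det_transpose]
    calc D = B⁻¹ * (B * D * Bᵀ) * Bᵀ⁻¹ := by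
          rw [Matrix.mul_assoc B, nonsing_inv_mul_cancel_left _ _ hBdet,
            mul_nonsing_inv_cancel_right _ _ hBTdet]
      _ = 0 := by rw [h, Matrix.mul_zero, Matrix.zero_mul]
  · rintro rfl
    simp

lemma trace_mul_mul_mul_transpose_add {V : Matrix n n ℝ} (hV : V.IsSymm) (E D : Matrix n n ℝ) :
    trace (V * (E + D) * V * (E + D)ᵀ) =
      trace (V * E * V * Eᵀ) + 2 * trace (V * E * V * Dᵀ) + trace (V * D * V * Dᵀ) := by
  have hsymm : trace (V * D * V * Eᵀ) = trace (V * E * V * Dᵀ) :=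
    calc trace (V * D * V * Eᵀ) = trace (V * D * V * Eᵀ)ᵀ := (trace_transpose _).symm
      _ = trace (E * V * Dᵀ * V) := by
        simp only [transpose_mul, transpose_transpose, hV.eq, Matrix.mul_assoc]
      _ = trace (V * E * V * Dᵀ) := by rw [trace_mul_comm]; simp only [Matrix.mul_assoc]
  simp only [transpose_add, Matrix.mul_add, Matrix.add_mul, trace_add, hsymm]
  ring

end WeightedTrace

section SecantUpdate

variable {n q : ℕ} (S : Matrix (Fin n) (Fin q) ℝ) (W R : Matrix (Fin n) (Fin n) ℝ)

lemma projMat_transpose (hW : W.IsSymm) : (projMat S W)ᵀ = projMat S W := by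
  have hSWS : (Sᵀ * W * S)ᵀ = Sᵀ * W * S := by
    rw [transpose_mul, transpose_mul, transpose_transpose, hW.eq, Matrix.mul_assoc]
  rw [projMat, transpose_mul, transpose_mul, transpose_transpose, transpose_nonsing_inv, hSWS]
  simp only [Matrix.mul_assoc]

lemma projMat_mul_mul_self (h : IsUnit (Sᵀ * W * S).det) : projMat S W * W * S = S := by
  rw [projMat, show S * (Sᵀ * W * S)⁻¹ * Sᵀ * W * S = S * ((Sᵀ * W * S)⁻¹ * (Sᵀ * W * S)) by
    simp only [Matrix.mul_assoc], nonsing_inv_mul _ h, Matrix.mul_one]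

lemma mul_projMat_eq_zero {D : Matrix (Fin n) (Fin n) ℝ} (hD : D * S = 0) :
    D * projMat S W = 0 := by
  rw [projMat, ← Matrix.mul_assoc, ← Matrix.mul_assoc, hD, Matrix.zero_mul, Matrix.zero_mul]

lemma projMat_mul_eq_zero {D : Matrix (Fin n) (Fin n) ℝ} (hD : Sᵀ * D = 0) :
    projMat S W * D = 0 := by
  rw [projMat, Matrix.mul_assoc, hD, Matrix.mul_zero]

noncomputable def symmSecantUpdate : Matrix (Fin n) (Fin n) ℝ :=
  W * projMat S W * R * (1 - projMat S W * W) + R * projMat S W * W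

lemma symmSecantUpdate_isSymm (hW : W.IsSymm) (hR : R.IsSymm) :
    (symmSecantUpdate S W R).IsSymm := by
  simp only [IsSymm, symmSecantUpdate, transpose_add, transpose_mul, transpose_sub,
    projMat_transpose S W hW, hW.eq, hR.eq, Matrix.mul_sub, Matrix.mul_one, Matrix.mul_assoc]
  abel

lemma symmSecantUpdate_mul (h : IsUnit (Sᵀ * W * S).det) :
    symmSecantUpdate S W R * S = R * S := by
  have hP : projMat S W * (W * S) = S := by
    rw [← Matrix.mul_assoc, projMat_mul_mul_self S W h]
  simp only [symmSecantUpdate, Matrix.add_mul, Matrix.sub_mul, Matrix.mul_sub, Matrix.mul_one,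
    Matrix.mul_assoc, hP]
  abel

lemma trace_inv_mul_symmSecantUpdate_mul_inv_mul_eq_zero (hW : IsUnit W.det)
    {D : Matrix (Fin n) (Fin n) ℝ} (hD : D.IsSymm) (hDS : D * S = 0) :
    trace (W⁻¹ * symmSecantUpdate S W R * W⁻¹ * Dᵀ) = 0 := by
  have hSD : Sᵀ * D = 0 := by rw [← hD.eq, ← transpose_mul, hDS, transpose_zero]
  have hPD := projMat_mul_eq_zero S W hSD
  have hDP := mul_projMat_eq_zero S W hDS
  have hsplit : W⁻¹ * symmSecantUpdate S W R * W⁻¹ * Dᵀ =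
      projMat S W * (R * (1 - projMat S W * W) * W⁻¹ * D) + W⁻¹ * R * (projMat S W * D) := by
    simp only [symmSecantUpdate, hD.eq, Matrix.mul_add, Matrix.add_mul, Matrix.mul_assoc,
      nonsing_inv_mul_cancel_left _ _ hW, mul_nonsing_inv_cancel_left _ _ hW]
  rw [hsplit, hPD, Matrix.mul_zero, add_zero, trace_mul_comm]
  simp only [Matrix.mul_assoc, hDP, Matrix.mul_zero, trace_zero]

end SecantUpdate

theorem stmt1_general {n q : ℕ}
    (W : Matrix (Fin n) (Fin n) ℝ) (hW : W.PosDef)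
    (S : Matrix (Fin n) (Fin q) ℝ)
    (hS : LinearIndependent ℝ (fun j : Fin q => Sᵀ j))
    (R : Matrix (Fin n) (Fin n) ℝ) (hR : R.IsSymm) :
    ∀ E' : Matrix (Fin n) (Fin n) ℝ, E'.IsSymm → E' * S = R * S →
      (trace (W⁻¹ * (W * projMat S W * R * (1 - projMat S W * W) + R * projMat S W * W) * W⁻¹ *
          (W * projMat S W * R * (1 - projMat S W * W) + R * projMat S W * W)ᵀ)
        ≤ trace (W⁻¹ * E' * W⁻¹ * E'ᵀ)) ∧
      (trace (W⁻¹ * (W * projMat S W * R * (1 - projMat S W * W) + R * projMat S W * W) * W⁻¹ *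
          (W * projMat S W * R * (1 - projMat S W * W) + R * projMat S W * W)ᵀ)
        = trace (W⁻¹ * E' * W⁻¹ * E'ᵀ) →
        E' = W * projMat S W * R * (1 - projMat S W * W) + R * projMat S W * W) := by
  intro E' hE' hE'S
  rw [show W * projMat S W * R * (1 - projMat S W * W) + R * projMat S W * W =
    symmSecantUpdate S W R from rfl]
  set E := symmSecantUpdate S W R
  have hWsymm : W.IsSymm := isHermitian_iff_isSymm.mp hW.isHermitian
  have hSWS : IsUnit (Sᵀ * W * S).det := by
    have := hW.conjTranspose_mul_mul_same (mulVec_injective_iff.mpr hS)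
    rw [conjTranspose_eq_transpose_of_trivial] at this
    exact this.det_pos.ne'.isUnit
  obtain ⟨D, rfl⟩ : ∃ D, E' = E + D := ⟨E' - E, by abel⟩
  have hDS : D * S = 0 := by
    rwa [Matrix.add_mul, symmSecantUpdate_mul S W R hSWS, add_eq_left] at hE'S
  have hD : D.IsSymm := by
    have h := hE'.eq
    rwa [transpose_add, (symmSecantUpdate_isSymm S W R hWsymm hR).eq, add_right_inj] at h
  have hsplit : trace (W⁻¹ * (E + D) * W⁻¹ * (E + D)ᵀ) =
      trace (W⁻¹ * E * W⁻¹ * Eᵀ) + trace (W⁻¹ * D * W⁻¹ * Dᵀ) := by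
    rw [trace_mul_mul_mul_transpose_add hWsymm.inv,
      trace_inv_mul_symmSecantUpdate_mul_inv_mul_eq_zero S W R hW.det_pos.ne'.isUnit hD hDS]
    ring
  rw [hsplit]
  refine ⟨le_add_of_nonneg_right (hW.inv.posSemidef.trace_mul_mul_mul_transpose_nonneg D),
    fun h => ?_⟩
  rw [(hW.inv.trace_mul_mul_mul_transpose_eq_zero_iff (D := D)).mp (by linarith), add_zero]

/-- `E := W·P·R·(I − P·W) + R·P·W` is the unique minimizer of the weighted Frobenius
norm objective `E' ↦ Tr(W⁻¹E'W⁻¹(E')ᵀ)` over symmetric `E'` with `E'·S = R·S`. -/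
theorem stmt1 {n q : ℕ} (hn : 0 < n) (hq : 0 < q)
    (W : Matrix (Fin n) (Fin n) ℝ) (hW : W.PosDef)
    (S : Matrix (Fin n) (Fin q) ℝ)
    (hS : LinearIndependent ℝ (fun j : Fin q => Sᵀ j))
    (R : Matrix (Fin n) (Fin n) ℝ) (hR : R.IsSymm) :
    ∀ E' : Matrix (Fin n) (Fin n) ℝ, E'.IsSymm → E' * S = R * S →
      (trace (W⁻¹ * (W * projMat S W * R * (1 - projMat S W * W) + R * projMat S W * W) * W⁻¹ *
          (W * projMat S W * R * (1 - projMat S W * W) + R * projMat S W * W)ᵀ)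
        ≤ trace (W⁻¹ * E' * W⁻¹ * E'ᵀ)) ∧
      (trace (W⁻¹ * (W * projMat S W * R * (1 - projMat S W * W) + R * projMat S W * W) * W⁻¹ *
          (W * projMat S W * R * (1 - projMat S W * W) + R * projMat S W * W)ᵀ)
        = trace (W⁻¹ * E' * W⁻¹ * E'ᵀ) →
        E' = W * projMat S W * R * (1 - projMat S W * W) + R * projMat S W * W) :=
  stmt1_general W hW S hS R hR
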